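/- There exists an optimal deterministic policy: there is a policy π* : S → A such that for every deterministic policy σ : S → A and every state s ∈ S, v_σ s ≤ v_{π*} s, where v_σ and v_{π*} are the respective value functions. -/

import Mathlib

/-!
The Bellman optimality operator `(T v) s = max_a (r s a + γ ∑ P s a s' v s')` is a
`γ`-contraction for the sup norm, so it has a fixed point `v*`. A policy that is greedy with
respect to `v*` has `v*` as its value function. For any other policy `σ`, the difference
`u = v_σ - v*` satisfies `u ≤ γ P_σ u`; evaluated at a state where `u` is maximal this gives
`max u ≤ γ max u`, hence `u ≤ 0`.
-/

open Finset

namespace Finset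

variable {ι : Type*} (s : Finset ι) (hs : s.Nonempty) {f g : ι → ℝ} {c : ℝ}

lemma sup'_le_sup'_add (h : ∀ i ∈ s, f i ≤ g i + c) : s.sup' hs f ≤ s.sup' hs g + c :=
  sup'_le _ _ fun i hi => (h i hi).trans (by gcongr; exact le_sup' g hi)

lemma abs_sup'_sub_sup'_le (h : ∀ i ∈ s, |f i - g i| ≤ c) :
    |s.sup' hs f - s.sup' hs g| ≤ c := by
  refine abs_sub_le_iff.2 ⟨?_, ?_⟩ <;> rw [sub_le_iff_le_add']
  · exact sup'_le_sup'_add s hs fun i hi => by linarith [(abs_sub_le_iff.1 (h i hi)).1]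
  · exact sup'_le_sup'_add s hs fun i hi => by linarith [(abs_sub_le_iff.1 (h i hi)).2]

end Finset

section WeightedSum

variable {S : Type*} [Fintype S] {p : S → ℝ}

lemma weighted_sum_le_of_le (hp0 : ∀ s, 0 ≤ p s) (hp1 : ∑ s, p s = 1) {u : S → ℝ} {c : ℝ}
    (hu : ∀ s, u s ≤ c) : ∑ s, p s * u s ≤ c :=
  calc ∑ s, p s * u s ≤ ∑ s, p s * c :=
        sum_le_sum fun s _ => mul_le_mul_of_nonneg_left (hu s) (hp0 s)
    _ = c := by rw [← sum_mul, hp1, one_mul]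

lemma abs_weighted_sum_le_norm (hp0 : ∀ s, 0 ≤ p s) (hp1 : ∑ s, p s = 1) (u : S → ℝ) :
    |∑ s, p s * u s| ≤ ‖u‖ :=
  calc |∑ s, p s * u s| ≤ ∑ s, |p s * u s| := abs_sum_le_sum_abs _ _
    _ = ∑ s, p s * |u s| := by simp only [abs_mul, abs_of_nonneg (hp0 _)]
    _ ≤ ‖u‖ := weighted_sum_le_of_le hp0 hp1 fun s => norm_le_pi_norm u s

end WeightedSum

section MDP

variable {S A : Type*} [Fintype S] (P : S → A → S → ℝ) (r : S → A → ℝ) (γ : ℝ)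

def qValue (v : S → ℝ) (s : S) (a : A) : ℝ := r s a + γ * ∑ s', P s a s' * v s'

def bellmanOptimality [Fintype A] [Nonempty A] (v : S → ℝ) (s : S) : ℝ :=
  univ.sup' univ_nonempty (qValue P r γ v s)

variable {P r γ}

lemma qValue_sub_qValue (v w : S → ℝ) (s : S) (a : A) :
    qValue P r γ v s a - qValue P r γ w s a = γ * ∑ s', P s a s' * (v - w) s' := by
  simp only [qValue, Pi.sub_apply, mul_sub, sum_sub_distrib]
  ring

lemma qValue_le_bellmanOptimality [Fintype A] [Nonempty A] (v : S → ℝ) (s : S) (a : A) :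
    qValue P r γ v s a ≤ bellmanOptimality P r γ v s :=
  le_sup' _ (mem_univ a)

lemma exists_greedy_policy [Fintype A] [Nonempty A] (v : S → ℝ) :
    ∃ π : S → A, ∀ s, bellmanOptimality P r γ v s = qValue P r γ v s (π s) := by
  choose π _ hπ using fun s => exists_mem_eq_sup' univ_nonempty (qValue P r γ v s)
  exact ⟨π, hπ⟩

lemma lipschitzWith_bellmanOptimality [Fintype A] [Nonempty A] (hP0 : ∀ s a s', 0 ≤ P s a s')
    (hP1 : ∀ s a, ∑ s', P s a s' = 1) (hγ : 0 ≤ γ) :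
    LipschitzWith ⟨γ, hγ⟩ (bellmanOptimality P r γ) := by
  refine LipschitzWith.of_dist_le_mul fun v w => (dist_pi_le_iff (by positivity)).2 fun s => ?_
  refine abs_sup'_sub_sup'_le _ _ fun a _ => ?_
  rw [qValue_sub_qValue, abs_mul, abs_of_nonneg hγ, dist_eq_norm]
  exact mul_le_mul_of_nonneg_left (abs_weighted_sum_le_norm (hP0 s a) (hP1 s a) (v - w)) hγ

lemma contractingWith_bellmanOptimality [Fintype A] [Nonempty A]
    (hP0 : ∀ s a s', 0 ≤ P s a s') (hP1 : ∀ s a, ∑ s', P s a s' = 1)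
    (hγ0 : 0 ≤ γ) (hγ1 : γ < 1) :
    ContractingWith ⟨γ, hγ0⟩ (bellmanOptimality P r γ) :=
  ⟨hγ1, lipschitzWith_bellmanOptimality hP0 hP1 hγ0⟩

lemma nonpos_of_le_discounted_weighted_sum {K : S → S → ℝ} (hK0 : ∀ s s', 0 ≤ K s s')
    (hK1 : ∀ s, ∑ s', K s s' = 1) (hγ0 : 0 ≤ γ) (hγ1 : γ < 1) {u : S → ℝ}
    (hu : ∀ s, u s ≤ γ * ∑ s', K s s' * u s') (s : S) : u s ≤ 0 := by
  obtain ⟨s₀, -, hmax⟩ := exists_max_image univ u ⟨s, mem_univ s⟩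
  have hs₀ : u s₀ ≤ γ * u s₀ := (hu s₀).trans <| mul_le_mul_of_nonneg_left
    (weighted_sum_le_of_le (hK0 s₀) (hK1 s₀) fun s' => hmax s' (mem_univ s')) hγ0
  nlinarith [hmax s (mem_univ s)]

lemma le_of_forall_qValue_le (hP0 : ∀ s a s', 0 ≤ P s a s') (hP1 : ∀ s a, ∑ s', P s a s' = 1)
    (hγ0 : 0 ≤ γ) (hγ1 : γ < 1) {σ : S → A} {v vσ : S → ℝ}
    (hv : ∀ s, qValue P r γ v s (σ s) ≤ v s) (hvσ : ∀ s, vσ s = qValue P r γ vσ s (σ s))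
    (s : S) : vσ s ≤ v s := by
  refine sub_nonpos.1 <| nonpos_of_le_discounted_weighted_sum (fun s => hP0 s (σ s))
    (fun s => hP1 s (σ s)) hγ0 hγ1 (u := vσ - v) (fun s => ?_) s
  rw [← qValue_sub_qValue (r := r), Pi.sub_apply]
  linarith [hv s, hvσ s]

end MDP

theorem exists_optimal_policy_general
    {S A : Type*} [Fintype S] [Fintype A] [Nonempty A]
    (P : S → A → S → ℝ) (hP0 : ∀ s a s', 0 ≤ P s a s')
    (hP1 : ∀ s a, ∑ s', P s a s' = 1)
    (r : S → A → ℝ) (γ : ℝ) (hγ0 : 0 < γ) (hγ1 : γ < 1) :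
    ∃ (πstar : S → A) (vπstar : S → ℝ),
      (∀ s, vπstar s = r s (πstar s) + γ * ∑ s', P s (πstar s) s' * vπstar s') ∧
      ∀ (σ : S → A) (vσ : S → ℝ),
        (∀ s, vσ s = r s (σ s) + γ * ∑ s', P s (σ s) s' * vσ s') →
        ∀ s, vσ s ≤ vπstar s := by
  have hT := contractingWith_bellmanOptimality (r := r) hP0 hP1 hγ0.le hγ1
  set vstar := ContractingWith.fixedPoint _ hT
  have hfix : ∀ s, bellmanOptimality P r γ vstar s = vstar s := fun s =>
    congrFun (ContractingWith.fixedPoint_isFixedPt hT) s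
  obtain ⟨πstar, hgreedy⟩ := exists_greedy_policy (P := P) (r := r) (γ := γ) vstar
  refine ⟨πstar, vstar, fun s => (hfix s).symm.trans (hgreedy s), fun σ vσ hσ => ?_⟩
  exact le_of_forall_qValue_le hP0 hP1 hγ0.le hγ1
    (fun s => (qValue_le_bellmanOptimality vstar s (σ s)).trans_eq (hfix s)) hσ

/-- There exists an optimal deterministic policy. -/
theorem exists_optimal_policy
    {S A : Type*} [Fintype S] [Nonempty S] [Fintype A] [Nonempty A]
    (P : S → A → S → ℝ) (hP0 : ∀ s a s', 0 ≤ P s a s')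
    (hP1 : ∀ s a, ∑ s', P s a s' = 1)
    (r : S → A → ℝ) (γ : ℝ) (hγ0 : 0 < γ) (hγ1 : γ < 1) :
    ∃ (πstar : S → A) (vπstar : S → ℝ),
      (∀ s, vπstar s = r s (πstar s) + γ * ∑ s', P s (πstar s) s' * vπstar s') ∧
      ∀ (σ : S → A) (vσ : S → ℝ),
        (∀ s, vσ s = r s (σ s) + γ * ∑ s', P s (σ s) s' * vσ s') →
        ∀ s, vσ s ≤ vπstar s :=
  exists_optimal_policy_general P hP0 hP1 r γ hγ0 hγ1
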